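/- arXiv:2503.18508 — 2 statements merged into one kernel-verified Lean document; each statement's English description precedes it below -/
import Mathlib

section
/- Let 1 ≤ t < p < ∞, d ≥ 1, r > 0 and c_p ≥ 1. Let x, x*, q ∈ ℝ^d satisfy ‖x* − q‖_p ≤ r and ‖x − q‖_p ≤ c_p·r. Let M : ℝ^d → ℝ^d be the Mazur map M_{p,t} scaled down by the factor (p/t)·(2rc_p)^{p/t−1}, i.e., M(u)_i = (t/p)·(2rc_p)^{1−p/t}·sign(u_i)·|u_i|^{p/t}. Then ‖M(x* − x) − M(q − x)‖_t ≤ ‖x* − q‖_p ≤ r. -/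
noncomputable section

/-- The `r`-norm on `ℝ^m`: `‖x‖_r = (∑ i, |x i| ^ r) ^ (1/r)`. -/
noncomputable def pnorm {m : ℕ} (r : ℝ) (x : Fin m → ℝ) : ℝ :=
  (∑ i, |x i| ^ r) ^ (1 / r)

/-- The Mazur map `M_{p,t}` scaled down by the factor `(p/t) * a^(p/t − 1)`:
`M(u)_i = (t/p) * a^(1 − p/t) * sign(u_i) * |u_i|^(p/t)`. -/
noncomputable def scaledMazur {d : ℕ} (p t a : ℝ) (u : Fin d → ℝ) : Fin d → ℝ :=
  fun i => t / p * a ^ (1 - p / t) * Real.sign (u i) * |u i| ^ (p / t)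

open Real Finset

lemma rpowA {α : ℝ} (hα : 1 ≤ α) {b c : ℝ} (hc : 0 ≤ c) (hcb : c ≤ b) :
    b ^ α - c ^ α ≤ α * b ^ (α - 1) * (b - c) := by
  rcases eq_or_lt_of_le (hc.trans hcb) with h | hb
  · have hb0 : b = 0 := h.symm
    have hc0 : c = 0 := le_antisymm (hcb.trans hb0.le) hc
    subst hb0; subst hc0; simp
  · have hbne : b ≠ 0 := hb.ne'
    have hs : (-1 : ℝ) ≤ c / b - 1 := by
      have : 0 ≤ c / b := div_nonneg hc hb.le
      linarith
    have h1 : 1 + α * (c / b - 1) ≤ (c / b) ^ α := by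
      have := one_add_mul_self_le_rpow_one_add hs hα
      simpa using this
    have key : b ^ α * (1 + α * (c / b - 1)) ≤ c ^ α := by
      calc b ^ α * (1 + α * (c / b - 1)) ≤ b ^ α * (c / b) ^ α :=
            mul_le_mul_of_nonneg_left h1 (Real.rpow_nonneg hb.le α)
        _ = c ^ α := by
            rw [← Real.mul_rpow hb.le (div_nonneg hc hb.le), mul_div_cancel₀ _ hbne]
    have hb1 : b ^ (α - 1) = b ^ α / b := Real.rpow_sub_one hbne α
    calc b ^ α - c ^ α ≤ b ^ α - b ^ α * (1 + α * (c / b - 1)) := by linarith [key]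
      _ = α * b ^ (α - 1) * (b - c) := by rw [hb1]; field_simp; ring

lemma sgnA {α : ℝ} (hα : 0 < α) {b : ℝ} (hb : 0 ≤ b) :
    Real.sign b * |b| ^ α = b ^ α := by
  rcases eq_or_lt_of_le hb with h | h
  · rw [← h]; simp [Real.zero_rpow hα.ne']
  · rw [Real.sign_of_pos h, abs_of_pos h, one_mul]

lemma sgnN {α : ℝ} (b : ℝ) :
    Real.sign b * |b| ^ α = -(Real.sign (-b) * |(-b)| ^ α) := by
  rw [Real.sign_neg, abs_neg]; ring

lemma phi_mono {α : ℝ} (hα : 0 < α) {b c : ℝ} (hcb : c ≤ b) :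
    Real.sign c * |c| ^ α ≤ Real.sign b * |b| ^ α := by
  rcases le_total 0 c with h1 | h1
  · rw [sgnA hα h1, sgnA hα (h1.trans hcb)]
    exact Real.rpow_le_rpow h1 hcb hα.le
  · rcases le_total 0 b with h2 | h2
    · rw [sgnA hα h2, sgnN (α := α) c]
      have : 0 ≤ (-c) ^ α := Real.rpow_nonneg (by linarith) α
      have h3 : Real.sign (-c) * |(-c)| ^ α = (-c) ^ α := sgnA hα (by linarith)
      rw [h3]
      have := Real.rpow_nonneg h2 α
      linarith
    · rw [sgnN (α := α) c, sgnN (α := α) b, sgnA hα (by linarith : (0:ℝ) ≤ -c),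
        sgnA hα (by linarith : (0:ℝ) ≤ -b)]
      have : (-b) ^ α ≤ (-c) ^ α := Real.rpow_le_rpow (by linarith) (by linarith) hα.le
      linarith

lemma phi_lip_aux {α : ℝ} (hα : 1 ≤ α) {b c M : ℝ} (hcb : c ≤ b) (hb : |b| ≤ M) (hc : |c| ≤ M) :
    Real.sign b * |b| ^ α - Real.sign c * |c| ^ α ≤ α * M ^ (α - 1) * (b - c) := by
  have hα0 : (0:ℝ) < α := lt_of_lt_of_le one_pos hα
  have hM : 0 ≤ M := le_trans (abs_nonneg b) hb
  have hα1 : (0:ℝ) ≤ α - 1 := by linarith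
  rcases le_total 0 c with h1 | h1
  · -- 0 ≤ c ≤ b
    have hb0 : 0 ≤ b := h1.trans hcb
    rw [sgnA hα0 h1, sgnA hα0 hb0]
    have h2 : b ^ α - c ^ α ≤ α * b ^ (α - 1) * (b - c) := rpowA hα h1 hcb
    have h3 : b ^ (α - 1) ≤ M ^ (α - 1) :=
      Real.rpow_le_rpow hb0 (le_trans (le_abs_self b) hb) hα1
    have h5 : α * b ^ (α - 1) * (b - c) ≤ α * M ^ (α - 1) * (b - c) :=
      mul_le_mul_of_nonneg_right (mul_le_mul_of_nonneg_left h3 hα0.le) (sub_nonneg.mpr hcb)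
    linarith
  · rcases le_total 0 b with h2 | h2
    · -- c ≤ 0 ≤ b
      rw [sgnA hα0 h2, sgnN (α := α) c, sgnA hα0 (by linarith : (0:ℝ) ≤ -c)]
      have hbb : b ^ α - (0:ℝ) ^ α ≤ α * b ^ (α - 1) * (b - 0) := rpowA hα le_rfl h2
      have hcc : (-c) ^ α - (0:ℝ) ^ α ≤ α * (-c) ^ (α - 1) * (-c - 0) := rpowA hα le_rfl (by linarith)
      have h0 : (0:ℝ) ^ α = 0 := Real.zero_rpow hα0.ne'
      have h3 : b ^ (α - 1) ≤ M ^ (α - 1) :=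
        Real.rpow_le_rpow h2 (le_trans (le_abs_self b) hb) hα1
      have h4 : (-c) ^ (α - 1) ≤ M ^ (α - 1) :=
        Real.rpow_le_rpow (by linarith) (le_trans (neg_le_abs c) hc) hα1
      have h5 : α * b ^ (α - 1) * b ≤ α * M ^ (α - 1) * b :=
        mul_le_mul_of_nonneg_right (mul_le_mul_of_nonneg_left h3 hα0.le) h2
      have h6 : α * (-c) ^ (α - 1) * (-c) ≤ α * M ^ (α - 1) * (-c) :=
        mul_le_mul_of_nonneg_right (mul_le_mul_of_nonneg_left h4 hα0.le) (by linarith)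
      have h7 : α * M ^ (α - 1) * b + α * M ^ (α - 1) * (-c) = α * M ^ (α - 1) * (b - c) := by ring
      linarith
    · -- c ≤ b ≤ 0
      rw [sgnN (α := α) c, sgnN (α := α) b, sgnA hα0 (by linarith : (0:ℝ) ≤ -c),
        sgnA hα0 (by linarith : (0:ℝ) ≤ -b)]
      have h2' : (-c) ^ α - (-b) ^ α ≤ α * (-c) ^ (α - 1) * (-c - -b) := rpowA hα (by linarith) (by linarith)
      have h4 : (-c) ^ (α - 1) ≤ M ^ (α - 1) :=
        Real.rpow_le_rpow (by linarith) (le_trans (neg_le_abs c) hc) hα1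
      have h5 : α * (-c) ^ (α - 1) * (-c - -b) ≤ α * M ^ (α - 1) * (-c - -b) :=
        mul_le_mul_of_nonneg_right (mul_le_mul_of_nonneg_left h4 hα0.le) (by linarith)
      have h7 : α * M ^ (α - 1) * (-c - -b) = α * M ^ (α - 1) * (b - c) := by ring
      linarith

lemma phi_lip {α : ℝ} (hα : 1 ≤ α) {b c M : ℝ} (hb : |b| ≤ M) (hc : |c| ≤ M) :
    |Real.sign b * |b| ^ α - Real.sign c * |c| ^ α| ≤ α * M ^ (α - 1) * |b - c| := by
  have hα0 : (0:ℝ) < α := lt_of_lt_of_le one_pos hα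
  rcases le_total c b with h | h
  · rw [abs_of_nonneg (sub_nonneg.mpr (phi_mono hα0 h)), abs_of_nonneg (sub_nonneg.mpr h)]
    exact phi_lip_aux hα h hb hc
  · rw [abs_sub_comm, abs_sub_comm b c,
      abs_of_nonneg (sub_nonneg.mpr (phi_mono hα0 h)), abs_of_nonneg (sub_nonneg.mpr h)]
    exact phi_lip_aux hα h hc hb


/-- If `‖x* − q‖_p ≤ r` and `‖x − q‖_p ≤ c_p * r`, then for the Mazur map `M_{p,t}` scaled
down by `(p/t) * (2 r c_p)^(p/t − 1)` one has
`‖M(x* − x) − M(q − x)‖_t ≤ ‖x* − q‖_p ≤ r`. -/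
theorem scaledMazur_nonexpansive (p t r cp : ℝ) (ht : 1 ≤ t) (htp : t < p)
    (hr : 0 < r) (hcp : 1 ≤ cp)
    (d : ℕ) (hd : 1 ≤ d) (x xstar q : Fin d → ℝ)
    (hxstar : pnorm p (xstar - q) ≤ r) (hx : pnorm p (x - q) ≤ cp * r) :
    pnorm t (scaledMazur p t (2 * r * cp) (xstar - x) -
        scaledMazur p t (2 * r * cp) (q - x)) ≤ pnorm p (xstar - q) ∧
      pnorm p (xstar - q) ≤ r := by
  refine ⟨?_, hxstar⟩
  have ht0 : (0:ℝ) < t := lt_of_lt_of_le one_pos ht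
  have hp0 : (0:ℝ) < p := ht0.trans htp
  set α : ℝ := p / t with hαdef
  have hα : 1 < α := (one_lt_div ht0).mpr htp
  have hα0 : (0:ℝ) < α := lt_trans one_pos hα
  have hαt : α * t = p := div_mul_cancel₀ p ht0.ne'
  set a : ℝ := 2 * r * cp with hadef
  have ha : 0 < a := by positivity
  set u : Fin d → ℝ := xstar - x with hu
  set v : Fin d → ℝ := q - x with hv
  set w : Fin d → ℝ := xstar - q with hw
  have huvw : ∀ i, u i = v i + w i := by
    intro i; simp [hu, hv, hw]
  have hwuv : ∀ i, u i - v i = w i := by intro i; rw [huvw i]; ring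
  set m : Fin d → ℝ := fun i => |v i| + |w i| with hm
  have hm0 : ∀ i, 0 ≤ m i := fun i => add_nonneg (abs_nonneg _) (abs_nonneg _)
  -- pointwise bound
  have h1 : ∀ i, |scaledMazur p t a u i - scaledMazur p t a v i| ≤
      a ^ ((1 : ℝ) - α) * ((m i) ^ (α - 1) * |w i|) := by
    intro i
    have hui : |u i| ≤ m i := by rw [huvw i]; exact abs_add_le _ _
    have hvi : |v i| ≤ m i := le_add_of_nonneg_right (abs_nonneg _)
    have hphi := phi_lip hα.le hui hvi
    have hfac : scaledMazur p t a u i - scaledMazur p t a v i =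
        (t / p * a ^ ((1:ℝ) - α)) *
          (Real.sign (u i) * |u i| ^ α - Real.sign (v i) * |v i| ^ α) := by
      simp only [scaledMazur, hαdef]; ring
    rw [hwuv i] at hphi
    rw [hfac, abs_mul, abs_of_nonneg (by positivity : (0:ℝ) ≤ t / p * a ^ ((1:ℝ) - α))]
    calc t / p * a ^ ((1:ℝ) - α) * |Real.sign (u i) * |u i| ^ α - Real.sign (v i) * |v i| ^ α|
        ≤ t / p * a ^ ((1:ℝ) - α) * (α * (m i) ^ (α - 1) * |w i|) := by
          apply mul_le_mul_of_nonneg_left _ (by positivity)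
          exact hphi
      _ = (t / p * α) * (a ^ ((1:ℝ) - α) * ((m i) ^ (α - 1) * |w i|)) := by ring
      _ = a ^ ((1:ℝ) - α) * ((m i) ^ (α - 1) * |w i|) := by
          rw [hαdef, div_mul_div_comm, mul_comm t p, div_self (by positivity), one_mul]
  -- sum bound
  set A : ℝ := ∑ i, |scaledMazur p t a u i - scaledMazur p t a v i| ^ t with hA
  have hA0 : 0 ≤ A := Finset.sum_nonneg fun i _ => Real.rpow_nonneg (abs_nonneg _) t
  have h2 : A ≤ a ^ (((1:ℝ) - α) * t) * ∑ i, (m i) ^ ((α - 1) * t) * |w i| ^ t := by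
    rw [Finset.mul_sum]
    apply Finset.sum_le_sum
    intro i _
    calc |scaledMazur p t a u i - scaledMazur p t a v i| ^ t
        ≤ (a ^ ((1:ℝ) - α) * ((m i) ^ (α - 1) * |w i|)) ^ t :=
          Real.rpow_le_rpow (abs_nonneg _) (h1 i) ht0.le
      _ = a ^ (((1:ℝ) - α) * t) * ((m i) ^ ((α - 1) * t) * |w i| ^ t) := by
          rw [Real.mul_rpow (by positivity) (by positivity),
            Real.mul_rpow (by positivity) (abs_nonneg _),
            ← Real.rpow_mul ha.le, ← Real.rpow_mul (hm0 i)]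
      _ = a ^ (((1:ℝ) - α) * t) * ((m i) ^ ((α - 1) * t) * |w i| ^ t) := rfl
  -- Hölder
  have hP : Real.HolderConjugate (α / (α - 1)) α := by
    rw [Real.holderConjugate_iff]
    constructor
    · rw [lt_div_iff₀ (by linarith)]; linarith
    · rw [inv_div]
      field_simp
      ring
  have h3 : ∑ i, (m i) ^ ((α - 1) * t) * |w i| ^ t ≤
      (∑ i, (m i) ^ p) ^ ((α - 1) / α) * (∑ i, |w i| ^ p) ^ (1 / α) := by
    have := Real.inner_le_Lp_mul_Lq_of_nonneg (Finset.univ)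
      (f := fun i => (m i) ^ ((α - 1) * t)) (g := fun i => |w i| ^ t) hP
      (fun i _ => Real.rpow_nonneg (hm0 i) _) (fun i _ => Real.rpow_nonneg (abs_nonneg _) _)
    have e1 : ∀ i : Fin d, ((m i) ^ ((α - 1) * t)) ^ (α / (α - 1)) = (m i) ^ p := by
      intro i
      rw [← Real.rpow_mul (hm0 i)]
      congr 1
      have hαne : α - 1 ≠ 0 := sub_ne_zero_of_ne hα.ne'
      field_simp
      linear_combination hαt
    have e2 : ∀ i : Fin d, (|w i| ^ t) ^ α = |w i| ^ p := by
      intro i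
      rw [← Real.rpow_mul (abs_nonneg _), mul_comm t α, hαt]
    have e3 : (1 : ℝ) / (α / (α - 1)) = (α - 1) / α := one_div_div _ _
    simp only [e1, e2, e3] at this
    convert this using 3
  -- Minkowski bound on ∑ m^p
  have h4 : (∑ i, (m i) ^ p) ≤ a ^ p := by
    have hmink := Real.Lp_add_le (Finset.univ) (fun i => |v i|) (fun i => |w i|) (by linarith : (1:ℝ) ≤ p)
    simp only [abs_abs] at hmink
    have e4 : ∀ i : Fin d, |(|v i| + |w i|)| = m i := fun i => abs_of_nonneg (hm0 i)
    simp only [e4] at hmink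
    have hbnd : (∑ i, (m i) ^ p) ^ ((1:ℝ)/p) ≤ a := by
      calc (∑ i, (m i) ^ p) ^ ((1:ℝ)/p)
          ≤ (∑ i, |v i| ^ p) ^ ((1:ℝ)/p) + (∑ i, |w i| ^ p) ^ ((1:ℝ)/p) := hmink
        _ = pnorm p v + pnorm p w := rfl
        _ ≤ cp * r + r := by
            have hvx : pnorm p v = pnorm p (x - q) := by
              unfold pnorm; congr 1
              refine Finset.sum_congr rfl fun i _ => ?_
              rw [hv]
              simp [abs_sub_comm]
            rw [hvx]
            exact add_le_add hx hxstar
        _ ≤ a := by rw [hadef]; nlinarith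
    have hsum0 : 0 ≤ ∑ i, (m i) ^ p := Finset.sum_nonneg fun i _ => Real.rpow_nonneg (hm0 i) _
    calc (∑ i, (m i) ^ p) = ((∑ i, (m i) ^ p) ^ ((1:ℝ)/p)) ^ p := by
          rw [← Real.rpow_mul hsum0, one_div, inv_mul_cancel₀ hp0.ne', Real.rpow_one]
      _ ≤ a ^ p := Real.rpow_le_rpow (Real.rpow_nonneg hsum0 _) hbnd hp0.le
  have h5 : (∑ i, (m i) ^ p) ^ ((α - 1) / α) ≤ a ^ ((α - 1) * t) := by
    calc (∑ i, (m i) ^ p) ^ ((α - 1) / α) ≤ (a ^ p) ^ ((α - 1) / α) :=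
          Real.rpow_le_rpow (Finset.sum_nonneg fun i _ => Real.rpow_nonneg (hm0 i) _) h4
            (div_nonneg (by linarith) hα0.le)
      _ = a ^ ((α - 1) * t) := by
          rw [← Real.rpow_mul ha.le]
          congr 1
          rw [← hαt]
          field_simp
  -- combine
  have hwsum0 : 0 ≤ ∑ i, |w i| ^ p := Finset.sum_nonneg fun i _ => Real.rpow_nonneg (abs_nonneg _) _
  have h6 : A ≤ (∑ i, |w i| ^ p) ^ ((1:ℝ) / α) := by
    calc A ≤ a ^ (((1:ℝ) - α) * t) * ∑ i, (m i) ^ ((α - 1) * t) * |w i| ^ t := h2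
      _ ≤ a ^ (((1:ℝ) - α) * t) *
          ((∑ i, (m i) ^ p) ^ ((α - 1) / α) * (∑ i, |w i| ^ p) ^ (1 / α)) :=
          mul_le_mul_of_nonneg_left h3 (Real.rpow_nonneg ha.le _)
      _ ≤ a ^ (((1:ℝ) - α) * t) * (a ^ ((α - 1) * t) * (∑ i, |w i| ^ p) ^ (1 / α)) := by
          apply mul_le_mul_of_nonneg_left _ (Real.rpow_nonneg ha.le _)
          exact mul_le_mul_of_nonneg_right h5 (Real.rpow_nonneg hwsum0 _)
      _ = (∑ i, |w i| ^ p) ^ ((1:ℝ) / α) := by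
          rw [← mul_assoc, ← Real.rpow_add ha]
          have : ((1:ℝ) - α) * t + (α - 1) * t = 0 := by ring
          rw [this, Real.rpow_zero, one_mul]
  -- conclude
  show A ^ ((1:ℝ)/t) ≤ pnorm p w
  calc A ^ ((1:ℝ)/t) ≤ ((∑ i, |w i| ^ p) ^ ((1:ℝ) / α)) ^ ((1:ℝ)/t) :=
        Real.rpow_le_rpow hA0 h6 (by positivity)
    _ = (∑ i, |w i| ^ p) ^ ((1:ℝ)/p) := by
        rw [← Real.rpow_mul hwsum0]
        congr 1
        rw [hαdef]
        field_simp
    _ = pnorm p w := rfl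
end
end

section
/- Let 1 ≤ t < p < ∞, d ≥ 1, r > 0, c_p ≥ 1 and c_t > 0. Let x, z, q ∈ ℝ^d satisfy ‖z − x‖_p ≤ 2rc_p and ‖q − x‖_p ≤ 2rc_p. Let M : ℝ^d → ℝ^d be the Mazur map M_{p,t} scaled down by the factor (p/t)·(2rc_p)^{p/t−1}, i.e., M(u)_i = (t/p)·(2rc_p)^{1−p/t}·sign(u_i)·|u_i|^{p/t}. If ‖M(z − x) − M(q − x)‖_t ≤ c_t·r, then ‖z − q‖_p ≤ (p/t)^{t/p}·c_t^{t/p}·(4c_p)^{1−t/p}·r. -/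
/-!
For `s = p / t ≥ 1`, the signed power `φ(x) = sign x · |x|^s` satisfies the pointwise inverse
Hölder bound `|a - b|^s ≤ 2^(s-1) |φ a - φ b|`: for arguments of equal sign this is the
superadditivity `(a - b)^s + b^s ≤ a^s`, for arguments of opposite sign the convexity bound
`(a + b)^s ≤ 2^(s-1) (a^s + b^s)`. Undoing the scaling of the Mazur map, raising to the power `t`
and summing over the coordinates gives
`‖z - q‖_p^p ≤ ((p/t) (4 r c_p)^(p/t - 1) ‖M(z - x) - M(q - x)‖_t)^t`,
and the hypothesis on `M` turns the right-hand side into the claimed bound.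
-/

noncomputable section

lemma rpow_add_le_two_rpow_mul_add_rpow {a b s : ℝ} (ha : 0 ≤ a) (hb : 0 ≤ b) (hs : 1 ≤ s) :
    (a + b) ^ s ≤ 2 ^ (s - 1) * (a ^ s + b ^ s) := by
  lift a to NNReal using ha
  lift b to NNReal using hb
  exact_mod_cast NNReal.rpow_add_le_mul_rpow_add_rpow a b hs

lemma rpow_sub_le_sub_rpow {a b s : ℝ} (hb : 0 ≤ b) (hba : b ≤ a) (hs : 1 ≤ s) :
    (a - b) ^ s ≤ a ^ s - b ^ s := by
  have := Real.add_rpow_le_rpow_add (sub_nonneg.2 hba) hb hs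
  rw [sub_add_cancel] at this
  linarith

/-- The coordinate map of the Mazur map `M_{p,q}`, with `s = p / q`. -/
def signedRpow (s x : ℝ) : ℝ := Real.sign x * |x| ^ s

lemma signedRpow_of_nonneg {s x : ℝ} (hs : 0 < s) (hx : 0 ≤ x) : signedRpow s x = x ^ s := by
  rcases hx.eq_or_lt with rfl | hx
  · simp [signedRpow, Real.zero_rpow hs.ne']
  · rw [signedRpow, Real.sign_of_pos hx, abs_of_pos hx, one_mul]

lemma signedRpow_neg (s x : ℝ) : signedRpow s (-x) = -signedRpow s x := by
  simp [signedRpow, Real.sign_neg]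

lemma abs_sub_rpow_le_signedRpow_sub_of_nonneg {s a b : ℝ} (hs : 1 ≤ s) (hb : 0 ≤ b)
    (hba : b ≤ a) : |a - b| ^ s ≤ signedRpow s a - signedRpow s b := by
  have hs0 : 0 < s := zero_lt_one.trans_le hs
  rw [abs_of_nonneg (sub_nonneg.2 hba), signedRpow_of_nonneg hs0 (hb.trans hba),
    signedRpow_of_nonneg hs0 hb]
  exact rpow_sub_le_sub_rpow hb hba hs

lemma abs_sub_rpow_le_signedRpow_sub_of_le {s a b : ℝ} (hs : 1 ≤ s) (hba : b ≤ a) :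
    |a - b| ^ s ≤ 2 ^ (s - 1) * (signedRpow s a - signedRpow s b) := by
  have hs0 : 0 < s := zero_lt_one.trans_le hs
  have h2 : (1 : ℝ) ≤ 2 ^ (s - 1) := Real.one_le_rpow one_le_two (by linarith)
  have le_two_rpow_mul {X Y : ℝ} (hXY : X ≤ Y) (hX : 0 ≤ X) : X ≤ 2 ^ (s - 1) * Y :=
    hXY.trans (le_mul_of_one_le_left (hX.trans hXY) h2)
  rcases le_total 0 b with hb | hb
  · exact le_two_rpow_mul (abs_sub_rpow_le_signedRpow_sub_of_nonneg hs hb hba) (by positivity)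
  rcases le_total a 0 with ha | ha
  · have h := abs_sub_rpow_le_signedRpow_sub_of_nonneg hs (neg_nonneg.2 ha) (neg_le_neg hba)
    simp only [signedRpow_neg, neg_sub_neg] at h
    exact le_two_rpow_mul h (by positivity)
  · have hφ : signedRpow s a - signedRpow s b = a ^ s + (-b) ^ s := by
      rw [signedRpow_of_nonneg hs0 ha, ← signedRpow_of_nonneg hs0 (neg_nonneg.2 hb),
        signedRpow_neg, sub_eq_add_neg]
    rw [abs_of_nonneg (sub_nonneg.2 hba), sub_eq_add_neg, hφ]
    exact rpow_add_le_two_rpow_mul_add_rpow ha (neg_nonneg.2 hb) hs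

lemma abs_sub_rpow_le_abs_signedRpow_sub {s : ℝ} (hs : 1 ≤ s) (a b : ℝ) :
    |a - b| ^ s ≤ 2 ^ (s - 1) * |signedRpow s a - signedRpow s b| := by
  rcases le_total b a with hba | hab
  · exact (abs_sub_rpow_le_signedRpow_sub_of_le hs hba).trans (by gcongr; exact le_abs_self _)
  · rw [abs_sub_comm a, abs_sub_comm (signedRpow s a)]
    exact (abs_sub_rpow_le_signedRpow_sub_of_le hs hab).trans (by gcongr; exact le_abs_self _)

lemma scaledMazur_apply_sub {d : ℕ} (p t a : ℝ) (u v : Fin d → ℝ) (i : Fin d) :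
    scaledMazur p t a u i - scaledMazur p t a v i =
      t / p * a ^ (1 - p / t) * (signedRpow (p / t) (u i) - signedRpow (p / t) (v i)) := by
  simp only [scaledMazur, signedRpow]
  ring

lemma abs_sub_rpow_le_abs_scaledMazur_sub {d : ℕ} {p t a : ℝ} (ht : 0 < t) (htp : t ≤ p)
    (ha : 0 < a) (u v : Fin d → ℝ) (i : Fin d) :
    |u i - v i| ^ (p / t) ≤
      p / t * (2 * a) ^ (p / t - 1) * |scaledMazur p t a u i - scaledMazur p t a v i| := by
  have hp : 0 < p := ht.trans_le htp
  have hscale : p / t * (2 * a) ^ (p / t - 1) * (t / p * a ^ (1 - p / t)) = 2 ^ (p / t - 1) := by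
    rw [Real.mul_rpow zero_le_two ha.le]
    calc p / t * (2 ^ (p / t - 1) * a ^ (p / t - 1)) * (t / p * a ^ (1 - p / t))
        = (p / t * (t / p)) * (a ^ (p / t - 1) * a ^ (1 - p / t)) * 2 ^ (p / t - 1) := by ring
      _ = 2 ^ (p / t - 1) := by
        rw [← Real.rpow_add ha, show p / t * (t / p) = 1 by field_simp]
        simp
  have hκ : 0 < t / p * a ^ (1 - p / t) := by positivity
  rw [scaledMazur_apply_sub, abs_mul, abs_of_pos hκ, ← mul_assoc, hscale]
  exact abs_sub_rpow_le_abs_signedRpow_sub ((one_le_div ht).2 htp) _ _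

lemma pnorm_nonneg {m : ℕ} (r : ℝ) (x : Fin m → ℝ) : 0 ≤ pnorm r x := by
  unfold pnorm; positivity

lemma pnorm_rpow {m : ℕ} {r : ℝ} (hr : r ≠ 0) (x : Fin m → ℝ) :
    pnorm r x ^ r = ∑ i, |x i| ^ r := by
  rw [pnorm, one_div, Real.rpow_inv_rpow (by positivity) hr]

lemma pnorm_le_rpow_of_abs_rpow_le {m : ℕ} {p t C : ℝ} (hp : 0 < p) (ht : 0 < t) (hC : 0 ≤ C)
    {x y : Fin m → ℝ} (hxy : ∀ i, |x i| ^ (p / t) ≤ C * |y i|) :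
    pnorm p x ≤ (C * pnorm t y) ^ (t / p) := by
  have hsum : ∑ i, |x i| ^ p ≤ (C * pnorm t y) ^ t := by
    rw [Real.mul_rpow hC (pnorm_nonneg t y), pnorm_rpow ht.ne', Finset.mul_sum]
    refine Finset.sum_le_sum fun i _ => ?_
    calc |x i| ^ p = (|x i| ^ (p / t)) ^ t := by
          rw [← Real.rpow_mul (abs_nonneg _), div_mul_cancel₀ p ht.ne']
      _ ≤ (C * |y i|) ^ t := by gcongr; exact hxy i
      _ = C ^ t * |y i| ^ t := Real.mul_rpow hC (abs_nonneg _)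
  calc pnorm p x = (∑ i, |x i| ^ p) ^ (1 / p) := rfl
    _ ≤ ((C * pnorm t y) ^ t) ^ (1 / p) := by gcongr
    _ = (C * pnorm t y) ^ (t / p) := by
        rw [← Real.rpow_mul (by have := pnorm_nonneg t y; positivity), mul_one_div]

lemma pnorm_sub_le_of_pnorm_scaledMazur_sub_le {d : ℕ} {p t a B : ℝ} (ht : 0 < t) (htp : t ≤ p)
    (ha : 0 < a) {u v : Fin d → ℝ} (h : pnorm t (scaledMazur p t a u - scaledMazur p t a v) ≤ B) :
    pnorm p (u - v) ≤ (p / t * (2 * a) ^ (p / t - 1) * B) ^ (t / p) := by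
  have hp : 0 < p := ht.trans_le htp
  refine (pnorm_le_rpow_of_abs_rpow_le hp ht (by positivity)
    (abs_sub_rpow_le_abs_scaledMazur_sub ht htp ha u v)).trans ?_
  have := pnorm_nonneg t (scaledMazur p t a u - scaledMazur p t a v)
  gcongr
  exact h

lemma mul_rpow_sub_one_mul_rpow_inv {s X Y r : ℝ} (hs : 0 < s) (hX : 0 ≤ X) (hY : 0 ≤ Y)
    (hr : 0 < r) :
    (s * (X * r) ^ (s - 1) * (Y * r)) ^ s⁻¹ = s ^ s⁻¹ * Y ^ s⁻¹ * X ^ (1 - s⁻¹) * r := by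
  have hexp : (s - 1) * s⁻¹ = 1 - s⁻¹ := by field_simp
  have hr' : r ^ (1 - s⁻¹) * r ^ s⁻¹ = r := by
    rw [← Real.rpow_add hr, sub_add_cancel, Real.rpow_one]
  rw [Real.mul_rpow (by positivity) (by positivity), Real.mul_rpow hs.le (by positivity),
    ← Real.rpow_mul (by positivity), hexp, Real.mul_rpow hX hr.le, Real.mul_rpow hY hr.le]
  linear_combination s ^ s⁻¹ * Y ^ s⁻¹ * X ^ (1 - s⁻¹) * hr'

theorem scaledMazur_pullback_general (p t r cp ct : ℝ) (ht : 1 ≤ t) (htp : t < p)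
    (hr : 0 < r) (hcp : 1 ≤ cp)
    (d : ℕ) (x z q : Fin d → ℝ)
    (h : pnorm t (scaledMazur p t (2 * r * cp) (z - x) -
        scaledMazur p t (2 * r * cp) (q - x)) ≤ ct * r) :
    pnorm p (z - q) ≤ (p / t) ^ (t / p) * ct ^ (t / p) * (4 * cp) ^ (1 - t / p) * r := by
  have ht0 : 0 < t := zero_lt_one.trans_le ht
  have hp0 : 0 < p := ht0.trans htp
  have hcp0 : 0 < cp := zero_lt_one.trans_le hcp
  have hct : 0 ≤ ct := nonneg_of_mul_nonneg_left ((pnorm_nonneg _ _).trans h) hr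
  calc pnorm p (z - q) = pnorm p ((z - x) - (q - x)) := by rw [sub_sub_sub_cancel_right]
    _ ≤ (p / t * (2 * (2 * r * cp)) ^ (p / t - 1) * (ct * r)) ^ (t / p) :=
        pnorm_sub_le_of_pnorm_scaledMazur_sub_le ht0 htp.le (by positivity) h
    _ = (p / t) ^ (t / p) * ct ^ (t / p) * (4 * cp) ^ (1 - t / p) * r := by
        rw [show 2 * (2 * r * cp) = 4 * cp * r by ring, ← inv_div p t,
          mul_rpow_sub_one_mul_rpow_inv (by positivity) (by positivity) hct hr]

/-- If `‖z − x‖_p, ‖q − x‖_p ≤ 2 r c_p` and the scaled Mazur map `M = M_{p,t}` (scaled down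
by `(p/t) * (2 r c_p)^(p/t − 1)`) satisfies `‖M(z − x) − M(q − x)‖_t ≤ c_t * r`, then
`‖z − q‖_p ≤ (p/t)^(t/p) * c_t^(t/p) * (4 c_p)^(1 − t/p) * r`. -/
theorem scaledMazur_pullback (p t r cp ct : ℝ) (ht : 1 ≤ t) (htp : t < p)
    (hr : 0 < r) (hcp : 1 ≤ cp) (hct : 0 < ct)
    (d : ℕ) (hd : 1 ≤ d) (x z q : Fin d → ℝ)
    (hz : pnorm p (z - x) ≤ 2 * r * cp) (hq : pnorm p (q - x) ≤ 2 * r * cp)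
    (h : pnorm t (scaledMazur p t (2 * r * cp) (z - x) -
        scaledMazur p t (2 * r * cp) (q - x)) ≤ ct * r) :
    pnorm p (z - q) ≤ (p / t) ^ (t / p) * ct ^ (t / p) * (4 * cp) ^ (1 - t / p) * r :=
  scaledMazur_pullback_general p t r cp ct ht htp hr hcp d x z q h
end
end
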